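/- arXiv:2005.03552 — 2 statements merged into one kernel-verified Lean document; each statement's English description precedes it below -/
import Mathlib

section
/- Assume additionally r_j ≥ 0 for all j and p_s > 0. Let (c_{i,j}) be a Never-Wait family and let (c'_{i,j}) be any feasible family. Then c_{s,n} ≤ (1 + (Σ_{i=1}^{s} p_i)/(⌈n/q_s⌉ · p_s)) · c'_{s,n}. In particular, with respect to the makespan, the competitive ratio of the Never-Wait algorithm tends to 1 as the number of jobs n tends to infinity. -/
/-!
Induction over stages and jobs gives `c_{i,j} ≤ c'_{i,j} + p_1 + ⋯ + p_i`: in case (a) the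
Never-Wait job leaves stage `i` at most `p_i` after the feasible bound `c'_{i-1,j} + p_i` (plus the
delay accumulated before stage `i`), and in case (b) it inherits the delay of job `j - q_i`.
Conversely, the feasibility inequalities at stage `s` force `c'_{s,j} ≥ ⌈j/q_s⌉ · p_s`, which turns
the additive error `∑ p_i` into the multiplicative one.
-/

open Finset

namespace Nat

lemma ceilDiv_eq_one {j q : ℕ} (hj : 1 ≤ j) (hjq : j ≤ q) : j ⌈/⌉ q = 1 := by
  rw [ceilDiv_eq_add_pred_div]
  exact Nat.div_eq_of_lt_le (by omega) (by omega)

lemma ceilDiv_eq_sub_add_one {j q : ℕ} (hq : 1 ≤ q) (hqj : q < j) :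
    j ⌈/⌉ q = (j - q) ⌈/⌉ q + 1 := by
  rw [ceilDiv_eq_add_pred_div, ceilDiv_eq_add_pred_div,
    show j + q - 1 = (j - q + q - 1) + q by omega, add_div_right _ (by omega)]

lemma one_le_ceilDiv {j q : ℕ} (hj : 1 ≤ j) (hq : 1 ≤ q) : 1 ≤ j ⌈/⌉ q := by
  rw [ceilDiv_eq_add_pred_div]
  exact div_pos (by omega) (by omega)

end Nat

section Stage

/- A single stage with processing time `p` and capacity `q`; the functions `a`, `a'` and `b`, `b'`
are the completion times of jobs `1, …, n` before and after it. -/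
variable {n q : ℕ} {p : ℝ}

lemma ceilDiv_mul_le_of_feasible_stage {a b : ℕ → ℝ} (hq : 1 ≤ q)
    (ha : ∀ j, 1 ≤ j → j ≤ n → 0 ≤ a j)
    (hab : ∀ j, 1 ≤ j → j ≤ n → a j + p ≤ b j)
    (hbb : ∀ j, q < j → j ≤ n → b (j - q) + p ≤ b j) :
    ∀ j, 1 ≤ j → j ≤ n → ((j ⌈/⌉ q : ℕ) : ℝ) * p ≤ b j := by
  intro j
  induction j using Nat.strong_induction_on with
  | _ j ih =>
    intro hj hjn
    rcases le_or_gt j q with hjq | hqj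
    · rw [Nat.ceilDiv_eq_one hj hjq, Nat.cast_one, one_mul]
      linarith [ha j hj hjn, hab j hj hjn]
    · have hprev := ih (j - q) (by omega) (by omega) (by omega)
      rw [Nat.ceilDiv_eq_sub_add_one hq hqj]
      push_cast
      linarith [hbb j hqj hjn]

lemma never_wait_stage_le_add {d : ℝ} {a a' b b' : ℕ → ℝ} (hq : 1 ≤ q)
    (ha : ∀ j, 1 ≤ j → j ≤ n → a j ≤ a' j + d)
    (hNW : ∀ j, 1 ≤ j → j ≤ n → b j ≤ a j + 2 * p ∨ (q < j ∧ b j ≤ b (j - q) + p))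
    (hab' : ∀ j, 1 ≤ j → j ≤ n → a' j + p ≤ b' j)
    (hbb' : ∀ j, q < j → j ≤ n → b' (j - q) + p ≤ b' j) :
    ∀ j, 1 ≤ j → j ≤ n → b j ≤ b' j + (d + p) := by
  intro j
  induction j using Nat.strong_induction_on with
  | _ j ih =>
    intro hj hjn
    rcases hNW j hj hjn with hwait | ⟨hqj, hbatch⟩
    · linarith [ha j hj hjn, hab' j hj hjn]
    · linarith [ih (j - q) (by omega) (by omega) (by omega), hbb' j hqj hjn]

end Stage

lemma le_one_add_div_mul {x y P D : ℝ} (hxy : x ≤ y + P) (hP : 0 ≤ P) (hD : 0 < D)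
    (hDy : D ≤ y) : x ≤ (1 + P / D) * y :=
  calc x ≤ y + P / D * D := by rwa [div_mul_cancel₀ P hD.ne']
    _ ≤ y + P / D * y := by gcongr
    _ = (1 + P / D) * y := by ring

section Family

variable {s n : ℕ} {p : ℕ → ℝ} {q : ℕ → ℕ} {r : ℕ → ℝ} {c' : ℕ → ℕ → ℝ}

lemma feasible_nonneg (hp : ∀ i, 1 ≤ i → i ≤ s → 0 ≤ p i)
    (hr0 : ∀ j, 1 ≤ j → j ≤ n → 0 ≤ r j)
    (hc'0 : ∀ j, 1 ≤ j → j ≤ n → c' 0 j = r j)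
    (hc'1 : ∀ i j, 1 ≤ i → i ≤ s → 1 ≤ j → j ≤ n → c' (i - 1) j + p i ≤ c' i j) :
    ∀ i, i ≤ s → ∀ j, 1 ≤ j → j ≤ n → 0 ≤ c' i j := by
  intro i
  induction i with
  | zero => intro _ j hj hjn; rw [hc'0 j hj hjn]; exact hr0 j hj hjn
  | succ i ih =>
    intro hi j hj hjn
    have hstep := hc'1 (i + 1) j (by omega) hi hj hjn
    rw [Nat.add_sub_cancel] at hstep
    linarith [ih (by omega) j hj hjn, hp (i + 1) (by omega) hi]

lemma never_wait_le_feasible_add_sum {c : ℕ → ℕ → ℝ}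
    (hq : ∀ i, 1 ≤ i → i ≤ s → 1 ≤ q i)
    (hc0 : ∀ j, 1 ≤ j → j ≤ n → c 0 j = r j)
    (hNW : ∀ i j, 1 ≤ i → i ≤ s → 1 ≤ j → j ≤ n →
      c i j ≤ c (i - 1) j + 2 * p i ∨ (q i < j ∧ c i j ≤ c i (j - q i) + p i))
    (hc'0 : ∀ j, 1 ≤ j → j ≤ n → c' 0 j = r j)
    (hc'1 : ∀ i j, 1 ≤ i → i ≤ s → 1 ≤ j → j ≤ n → c' (i - 1) j + p i ≤ c' i j)
    (hc'2 : ∀ i j, 1 ≤ i → i ≤ s → q i < j → j ≤ n → c' i (j - q i) + p i ≤ c' i j) :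
    ∀ i, i ≤ s → ∀ j, 1 ≤ j → j ≤ n → c i j ≤ c' i j + ∑ k ∈ Icc 1 i, p k := by
  intro i
  induction i with
  | zero => intro _ j hj hjn; simp [hc0 j hj hjn, hc'0 j hj hjn]
  | succ i ih =>
    intro hi
    rw [sum_Icc_succ_top (by omega)]
    refine never_wait_stage_le_add (hq (i + 1) (by omega) hi) (ih (by omega)) ?_ ?_ ?_
    · intro j hj hjn; simpa using hNW (i + 1) j (by omega) hi hj hjn
    · intro j hj hjn; simpa using hc'1 (i + 1) j (by omega) hi hj hjn
    · exact fun j hqj hjn => hc'2 (i + 1) j (by omega) hi hqj hjn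

end Family

theorem never_wait_asymptotic_makespan_ratio_general
    (s n : ℕ) (hs : 1 ≤ s) (hn : 1 ≤ n)
    (p : ℕ → ℝ) (hp : ∀ i, 1 ≤ i → i ≤ s → 0 ≤ p i) (hps : 0 < p s)
    (q : ℕ → ℕ) (hq : ∀ i, 1 ≤ i → i ≤ s → 1 ≤ q i)
    (r : ℕ → ℝ)
    (hr0 : ∀ j, 1 ≤ j → j ≤ n → 0 ≤ r j)
    (c : ℕ → ℕ → ℝ)
    (hc0 : ∀ j, 1 ≤ j → j ≤ n → c 0 j = r j)
    (hNW : ∀ i j, 1 ≤ i → i ≤ s → 1 ≤ j → j ≤ n →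
      c i j ≤ c (i - 1) j + 2 * p i ∨ (q i < j ∧ c i j ≤ c i (j - q i) + p i))
    (c' : ℕ → ℕ → ℝ)
    (hc'0 : ∀ j, 1 ≤ j → j ≤ n → c' 0 j = r j)
    (hc'1 : ∀ i j, 1 ≤ i → i ≤ s → 1 ≤ j → j ≤ n → c' (i - 1) j + p i ≤ c' i j)
    (hc'2 : ∀ i j, 1 ≤ i → i ≤ s → q i < j → j ≤ n → c' i (j - q i) + p i ≤ c' i j) :
    c s n ≤
      (1 + (∑ i ∈ Finset.Icc 1 s, p i) / (((n ⌈/⌉ q s : ℕ) : ℝ) * p s)) * c' s n := by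
  have hqs := hq s hs le_rfl
  have hlast : ∀ j, 1 ≤ j → j ≤ n → ((j ⌈/⌉ q s : ℕ) : ℝ) * p s ≤ c' s j :=
    ceilDiv_mul_le_of_feasible_stage hqs
      (fun j hj hjn => feasible_nonneg hp hr0 hc'0 hc'1 (s - 1) (by omega) j hj hjn)
      (hc'1 s · hs le_rfl) (hc'2 s · hs le_rfl)
  exact le_one_add_div_mul
    (never_wait_le_feasible_add_sum hq hc0 hNW hc'0 hc'1 hc'2 s le_rfl n hn le_rfl)
    (sum_nonneg fun i hi => hp i (mem_Icc.1 hi).1 (mem_Icc.1 hi).2)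
    (mul_pos (by exact_mod_cast Nat.one_le_ceilDiv hn hqs) hps) (hlast n hn le_rfl)

/-- Asymptotic competitiveness of the Never-Wait algorithm with respect to the
makespan: with nonnegative release dates and `p_s > 0`, for a Never-Wait
family `c` and any feasible family `c'`,
`c_{s,n} ≤ (1 + (∑_{i=1}^{s} p_i) / (⌈n/q_s⌉ · p_s)) · c'_{s,n}`.
In particular the competitive ratio tends to `1` as `n → ∞`. -/
theorem never_wait_asymptotic_makespan_ratio
    (s n : ℕ) (hs : 1 ≤ s) (hn : 1 ≤ n)
    (p : ℕ → ℝ) (hp : ∀ i, 1 ≤ i → i ≤ s → 0 ≤ p i) (hps : 0 < p s)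
    (q : ℕ → ℕ) (hq : ∀ i, 1 ≤ i → i ≤ s → 1 ≤ q i)
    (r : ℕ → ℝ) (hr : ∀ j, 1 ≤ j → j < n → r j ≤ r (j + 1))
    (hr0 : ∀ j, 1 ≤ j → j ≤ n → 0 ≤ r j)
    (c : ℕ → ℕ → ℝ)
    (hc0 : ∀ j, 1 ≤ j → j ≤ n → c 0 j = r j)
    (hNW : ∀ i j, 1 ≤ i → i ≤ s → 1 ≤ j → j ≤ n →
      c i j ≤ c (i - 1) j + 2 * p i ∨ (q i < j ∧ c i j ≤ c i (j - q i) + p i))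
    (c' : ℕ → ℕ → ℝ)
    (hc'0 : ∀ j, 1 ≤ j → j ≤ n → c' 0 j = r j)
    (hc'1 : ∀ i j, 1 ≤ i → i ≤ s → 1 ≤ j → j ≤ n → c' (i - 1) j + p i ≤ c' i j)
    (hc'2 : ∀ i j, 1 ≤ i → i ≤ s → q i < j → j ≤ n → c' i (j - q i) + p i ≤ c' i j) :
    c s n ≤
      (1 + (∑ i ∈ Finset.Icc 1 s, p i) / (((n ⌈/⌉ q s : ℕ) : ℝ) * p s)) * c' s n :=
  never_wait_asymptotic_makespan_ratio_general s n hs hn p hp hps q hq r hr0 c hc0 hNW c' hc'0 hc'1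
    hc'2
end

section
/- Suppose s = 2, r_j ≥ 0 for all j, and let φ = (1+√5)/2 and t = φ·p_1 + (φ−1)·p_2. Let c_{1,j} and c_{2,j} (1 ≤ j ≤ n) be reals such that: (i) j ↦ c_{1,j} is nondecreasing; (ii) for every j, either c_{1,j} ≤ r_j + 2·p_1, or j > q_1 and c_{1,j} ≤ c_{1,j−q_1} + p_1; (iii) for every j with c_{1,j} ≤ t, either c_{2,j} = t + p_2, or j > q_2 and c_{2,j} ≤ c_{2,j−q_2} + p_2; (iv) for every j with c_{1,j} > t, either c_{2,j} ≤ c_{1,j} + 2·p_2, or j > q_2 and c_{2,j} ≤ c_{2,j−q_2} + p_2. Then c_{2,j} ≤ c*_{2,j} + p_1 + p_2 for all 1 ≤ j ≤ n. -/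
/-!
Both stages are compared with the lower bounds job by job, by strong induction along the chains
`j, j - q, j - 2q, …`. Whenever the algorithm finishes job `j` at most one processing time after
job `j - q` (a full batch earlier), the lower bound finishes it at least that much later, so the
additive gap is inherited.
Otherwise job `j` is finished within a fixed slack of its own lower bound: at stage 1 within
`p₁` of `c*_{1,j} ≥ r_j + p₁`; at stage 2 either at `t + p₂` with `t ≤ 2 p₁ + p₂ ≤ c*_{2,j} + p₁`
(this is where `φ < 2` enters), or within `2 p₂` of `c_{1,j} ≤ c*_{1,j} + p₁ ≤ c*_{2,j} + p₁ - p₂`.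
-/

theorem le_of_le_or_le_sub_add {f g : ℕ → ℝ} {n q : ℕ} {d : ℝ} (hq : 1 ≤ q)
    (hg : ∀ j, 1 ≤ j → j ≤ n → q < j → g (j - q) + d ≤ g j)
    (hf : ∀ j, 1 ≤ j → j ≤ n → f j ≤ g j ∨ (q < j ∧ f j ≤ f (j - q) + d)) :
    ∀ j, 1 ≤ j → j ≤ n → f j ≤ g j := by
  intro j
  induction j using Nat.strong_induction_on with
  | _ j ih =>
    intro h1 h2
    rcases hf j h1 h2 with hbase | ⟨hqj, hstep⟩
    · exact hbase
    · have hprev := ih (j - q) (by omega) (by omega) (by omega)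
      linarith [hg j h1 h2 hqj]

section Stage

variable {a b : ℕ → ℝ} {q j : ℕ} {p : ℝ}

theorem stage_prev_add_le (hle : j ≤ q → b j = a j + p)
    (hgt : q < j → b j = max (a j) (b (j - q)) + p) : a j + p ≤ b j := by
  rcases le_or_gt j q with h | h
  · exact (hle h).ge
  · rw [hgt h]
    gcongr
    exact le_max_left _ _

theorem stage_sub_add_le (hgt : q < j → b j = max (a j) (b (j - q)) + p) (h : q < j) :
    b (j - q) + p ≤ b j := by
  rw [hgt h]
  gcongr
  exact le_max_right _ _

end Stage

theorem golden_switch_time_le {φ p₁ p₂ : ℝ} (hφ : φ = (1 + Real.sqrt 5) / 2)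
    (hp₁ : 0 ≤ p₁) (hp₂ : 0 ≤ p₂) : φ * p₁ + (φ - 1) * p₂ ≤ 2 * p₁ + p₂ := by
  have hφ2 : φ < 2 := hφ ▸ Real.goldenRatio_lt_two
  nlinarith

theorem t_switch_second_stage_bound_general
    (n : ℕ)
    (p : ℕ → ℝ) (hp : ∀ i, 1 ≤ i → i ≤ 2 → 0 ≤ p i)
    (q : ℕ → ℕ) (hq : ∀ i, 1 ≤ i → i ≤ 2 → 1 ≤ q i)
    (r : ℕ → ℝ)
    (hr0 : ∀ j, 1 ≤ j → j ≤ n → 0 ≤ r j)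
    (cstar : ℕ → ℕ → ℝ)
    (hcstar0 : ∀ j, 1 ≤ j → j ≤ n → cstar 0 j = r j)
    (hcstarle : ∀ i j, 1 ≤ i → i ≤ 2 → 1 ≤ j → j ≤ n → j ≤ q i →
      cstar i j = cstar (i - 1) j + p i)
    (hcstargt : ∀ i j, 1 ≤ i → i ≤ 2 → 1 ≤ j → j ≤ n → q i < j →
      cstar i j = max (cstar (i - 1) j) (cstar i (j - q i)) + p i)
    (φ : ℝ) (hφ : φ = (1 + Real.sqrt 5) / 2)
    (t : ℝ) (ht : t = φ * p 1 + (φ - 1) * p 2)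
    (c1 c2 : ℕ → ℝ)
    (hc1 : ∀ j, 1 ≤ j → j ≤ n →
      c1 j ≤ r j + 2 * p 1 ∨ (q 1 < j ∧ c1 j ≤ c1 (j - q 1) + p 1))
    (hc2early : ∀ j, 1 ≤ j → j ≤ n → c1 j ≤ t →
      c2 j = t + p 2 ∨ (q 2 < j ∧ c2 j ≤ c2 (j - q 2) + p 2))
    (hc2late : ∀ j, 1 ≤ j → j ≤ n → t < c1 j →
      c2 j ≤ c1 j + 2 * p 2 ∨ (q 2 < j ∧ c2 j ≤ c2 (j - q 2) + p 2)) :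
    ∀ j, 1 ≤ j → j ≤ n → c2 j ≤ cstar 2 j + p 1 + p 2 := by
  have hp₁ := hp 1 le_rfl one_le_two
  have hp₂ := hp 2 one_le_two le_rfl
  have hstage₁ (j) (h1 : 1 ≤ j) (h2 : j ≤ n) : r j + p 1 ≤ cstar 1 j :=
    hcstar0 j h1 h2 ▸ stage_prev_add_le (a := cstar 0)
      (hcstarle 1 j le_rfl one_le_two h1 h2) (hcstargt 1 j le_rfl one_le_two h1 h2)
  have hstage₂ (j) (h1 : 1 ≤ j) (h2 : j ≤ n) : cstar 1 j + p 2 ≤ cstar 2 j :=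
    stage_prev_add_le (hcstarle 2 j one_le_two le_rfl h1 h2) (hcstargt 2 j one_le_two le_rfl h1 h2)
  have hc1_le : ∀ j, 1 ≤ j → j ≤ n → c1 j ≤ cstar 1 j + p 1 :=
    le_of_le_or_le_sub_add (hq 1 le_rfl one_le_two)
      (fun j h1 h2 hqj => by
        linarith [stage_sub_add_le (hcstargt 1 j le_rfl one_le_two h1 h2) hqj])
      (fun j h1 h2 => (hc1 j h1 h2).imp_left fun h => by linarith [hstage₁ j h1 h2])
  have ht_le : t ≤ 2 * p 1 + p 2 := ht ▸ golden_switch_time_le hφ hp₁ hp₂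
  refine le_of_le_or_le_sub_add (hq 2 one_le_two le_rfl)
    (fun j h1 h2 hqj => by
      linarith [stage_sub_add_le (hcstargt 2 j one_le_two le_rfl h1 h2) hqj])
    (fun j h1 h2 => ?_)
  rcases le_or_gt (c1 j) t with hearly | hlate
  · exact (hc2early j h1 h2 hearly).imp_left fun h => by
      linarith [hr0 j h1 h2, hstage₁ j h1 h2, hstage₂ j h1 h2]
  · exact (hc2late j h1 h2 hlate).imp_left fun h => by
      linarith [hc1_le j h1 h2, hstage₂ j h1 h2]

/-- Second-stage bound for all jobs in the t-Switch algorithm: with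
`φ = (1+√5)/2` and `t = φ p_1 + (φ−1) p_2`, under hypotheses (i)–(iv) on the
completion times `c_{1,·}, c_{2,·}` produced by the t-Switch algorithm,
`c_{2,j} ≤ c*_{2,j} + p_1 + p_2` for all `1 ≤ j ≤ n`. -/
theorem t_switch_second_stage_bound
    (n : ℕ) (hn : 1 ≤ n)
    (p : ℕ → ℝ) (hp : ∀ i, 1 ≤ i → i ≤ 2 → 0 ≤ p i)
    (q : ℕ → ℕ) (hq : ∀ i, 1 ≤ i → i ≤ 2 → 1 ≤ q i)
    (r : ℕ → ℝ) (hr : ∀ j, 1 ≤ j → j < n → r j ≤ r (j + 1))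
    (hr0 : ∀ j, 1 ≤ j → j ≤ n → 0 ≤ r j)
    (cstar : ℕ → ℕ → ℝ)
    (hcstar0 : ∀ j, 1 ≤ j → j ≤ n → cstar 0 j = r j)
    (hcstarle : ∀ i j, 1 ≤ i → i ≤ 2 → 1 ≤ j → j ≤ n → j ≤ q i →
      cstar i j = cstar (i - 1) j + p i)
    (hcstargt : ∀ i j, 1 ≤ i → i ≤ 2 → 1 ≤ j → j ≤ n → q i < j →
      cstar i j = max (cstar (i - 1) j) (cstar i (j - q i)) + p i)
    (φ : ℝ) (hφ : φ = (1 + Real.sqrt 5) / 2)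
    (t : ℝ) (ht : t = φ * p 1 + (φ - 1) * p 2)
    (c1 c2 : ℕ → ℝ)
    (hc1mono : ∀ j j', 1 ≤ j → j ≤ j' → j' ≤ n → c1 j ≤ c1 j')
    (hc1 : ∀ j, 1 ≤ j → j ≤ n →
      c1 j ≤ r j + 2 * p 1 ∨ (q 1 < j ∧ c1 j ≤ c1 (j - q 1) + p 1))
    (hc2early : ∀ j, 1 ≤ j → j ≤ n → c1 j ≤ t →
      c2 j = t + p 2 ∨ (q 2 < j ∧ c2 j ≤ c2 (j - q 2) + p 2))
    (hc2late : ∀ j, 1 ≤ j → j ≤ n → t < c1 j →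
      c2 j ≤ c1 j + 2 * p 2 ∨ (q 2 < j ∧ c2 j ≤ c2 (j - q 2) + p 2)) :
    ∀ j, 1 ≤ j → j ≤ n → c2 j ≤ cstar 2 j + p 1 + p 2 :=
  t_switch_second_stage_bound_general n p hp q hq r hr0 cstar hcstar0 hcstarle hcstargt φ hφ t ht c1
    c2 hc1 hc2early hc2late
end
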